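/- Discrete fractional Grönwall-type coercivity: for any sequence (v^n) of reals, the L1 discrete Caputo operator satisfies v^n · D^α_τ v^n ≥ (1/2) D^α_τ (v^2)^n, where (v^2)^n = (v^n)^2. -/

import Mathlib

/-!
Since `2 a (a - b) - (a² - b²) = (a - b)²`, the defect `2 vⁿ D vⁿ - D (v²)ⁿ` is, up to the positive
factor `ζ_τ`, the sum `∑ⱼ ζ_{n-j} (uⱼ₋₁ - uⱼ)` with `uⱼ = (vⁿ - vʲ)² ≥ 0` and `uₙ = 0`. Summing by
parts, this equals `ζ_{n-1} u₀` plus a combination of the `uⱼ` with coefficients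
`ζ_{n-j-1} - ζ_{n-j} ≥ 0`, which holds because `k ↦ (k+1)^{1-α} - k^{1-α}` is nonnegative and
nonincreasing by concavity of `x ↦ x^{1-α}`.
-/

/-- Coefficient `ζ^{(α)}_k = (k+1)^{1-α} - k^{1-α}` of the L1 scheme. -/
noncomputable def zetaW (α : ℝ) (k : ℕ) : ℝ :=
  ((k : ℝ) + 1) ^ (1 - α) - (k : ℝ) ^ (1 - α)

/-- L1 discrete Caputo derivative at step `n ≥ 1` with time step `τ`. -/
noncomputable def l1Caputo (α τ : ℝ) (v : ℕ → ℝ) (n : ℕ) : ℝ :=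
  (1 / (τ ^ α * Real.Gamma (2 - α))) *
    ∑ j ∈ Finset.Icc 1 n, zetaW α (n - j) * (v j - v (j - 1))

open Finset

lemma zetaW_nonneg {α : ℝ} (hα : α ≤ 1) (k : ℕ) : 0 ≤ zetaW α k :=
  sub_nonneg.mpr <| Real.rpow_le_rpow (by positivity) (by linarith) (by linarith)

lemma zetaW_antitone {α : ℝ} (hα0 : 0 ≤ α) (hα1 : α ≤ 1) : Antitone (zetaW α) := by
  refine antitone_nat_of_succ_le fun k => ?_
  have hconc := Real.concaveOn_rpow (p := 1 - α) (by linarith) (by linarith)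
  have hslope := hconc.slope_anti_adjacent (x := k) (y := k + 1) (z := k + 2)
    (Set.mem_Ici.mpr (by positivity)) (Set.mem_Ici.mpr (by positivity)) (by linarith)
    (by linarith)
  simp only [add_sub_cancel_left, div_one, show (k : ℝ) + 2 - (k + 1) = 1 by ring] at hslope
  simpa only [zetaW, Nat.cast_add, Nat.cast_one, add_assoc, one_add_one_eq_two] using hslope

/-- The boundary term `c n * u n` is what makes the inequality inductive in `n`. -/
lemma sum_Icc_mul_sub_add_nonneg {c u : ℕ → ℝ} (hc : Monotone c) (hc0 : 0 ≤ c 0)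
    (hu : ∀ j, 0 ≤ u j) (n : ℕ) :
    0 ≤ ∑ j ∈ Icc 1 n, c j * (u (j - 1) - u j) + c n * u n := by
  induction n with
  | zero => simpa using mul_nonneg hc0 (hu 0)
  | succ n ih =>
    rw [sum_Icc_succ_top (by omega), Nat.add_sub_cancel]
    nlinarith [mul_le_mul_of_nonneg_right (hc n.le_succ) (hu n)]

lemma half_sum_mul_sq_sub_le {b : ℕ → ℝ} (hb : Antitone b) (hb0 : ∀ k, 0 ≤ b k)
    (v : ℕ → ℝ) (n : ℕ) :
    1 / 2 * ∑ j ∈ Icc 1 n, b (n - j) * (v j ^ 2 - v (j - 1) ^ 2) ≤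
      v n * ∑ j ∈ Icc 1 n, b (n - j) * (v j - v (j - 1)) := by
  have hdefect := sum_Icc_mul_sub_add_nonneg (c := fun j => b (n - j))
    (u := fun j => (v n - v j) ^ 2) (fun i j hij => hb (by omega)) (hb0 n)
    (fun j => sq_nonneg _) n
  have hsquare : ∀ j ∈ Icc 1 n, b (n - j) * ((v n - v (j - 1)) ^ 2 - (v n - v j) ^ 2) =
      2 * (v n * (b (n - j) * (v j - v (j - 1))) -
        1 / 2 * (b (n - j) * (v j ^ 2 - v (j - 1) ^ 2))) := fun j _ => by ring
  simp only [sub_self, zero_pow two_ne_zero, mul_zero, add_zero] at hdefect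
  rw [sum_congr rfl hsquare, ← mul_sum, sum_sub_distrib, ← mul_sum, ← mul_sum] at hdefect
  linarith

theorem l1Caputo_coercivity_general (α τ : ℝ) (hα0 : 0 < α) (hα1 : α < 1) (hτ : 0 < τ)
    (v : ℕ → ℝ) (n : ℕ) :
    (1 / 2) * l1Caputo α τ (fun m => (v m) ^ 2) n ≤ v n * l1Caputo α τ v n := by
  have hscale : 0 ≤ 1 / (τ ^ α * Real.Gamma (2 - α)) := by
    have := Real.Gamma_pos_of_pos (show 0 < 2 - α by linarith)
    have := Real.rpow_pos_of_pos hτ α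
    positivity
  have hsum := half_sum_mul_sq_sub_le (zetaW_antitone hα0.le hα1.le) (zetaW_nonneg hα1.le) v n
  unfold l1Caputo
  calc 1 / 2 * (1 / (τ ^ α * Real.Gamma (2 - α)) * _)
      = 1 / (τ ^ α * Real.Gamma (2 - α)) * (1 / 2 * _) := by ring
    _ ≤ 1 / (τ ^ α * Real.Gamma (2 - α)) * (v n * _) := mul_le_mul_of_nonneg_left hsum hscale
    _ = _ := by ring

theorem l1Caputo_coercivity (α τ : ℝ) (hα0 : 0 < α) (hα1 : α < 1) (hτ : 0 < τ)
    (v : ℕ → ℝ) (n : ℕ) (hn : 1 ≤ n) :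
    (1 / 2) * l1Caputo α τ (fun m => (v m) ^ 2) n ≤ v n * l1Caputo α τ v n :=
  l1Caputo_coercivity_general α τ hα0 hα1 hτ v n
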